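/- If in a row reduction a row v_j (with LP(v_j) = LP(v_i) and deg v_i ≤ deg v_j, i ≠ j) is replaced by v_j' = v_j − α·x^δ·v_i, where α ∈ F and δ ∈ ℕ are chosen so that the leading term of the polynomial at position LP(v_j) is cancelled, then val(v_j') < val(v_j), where val(v) = (ℓ+1)·deg v + LP(v). -/

import Mathlib

/-!
Subtracting `α x^δ v_i` from `v_j` cancels the leading term of coordinate `h = LP(v_j)`.
Since `deg v_i + δ = deg v_j`, it adds only terms of degree `≤ deg v_j` to every coordinate,
and of degree `< deg v_j` to the coordinates beyond `h`, where `v_i` has degree `< deg v_i`.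
So either the degree of the row drops, which outweighs any change of `LP < ℓ + 1`,
or it stays and the leading position moves strictly below `h`.
-/

open Polynomial

noncomputable section

variable {F : Type*} [Field F]

/-- The degree of a vector of polynomials: maximum of the coordinate degrees. -/
def vecDeg {n : ℕ} (v : Fin n → Polynomial F) : WithBot ℕ :=
  Finset.univ.sup fun j => (v j).degree

/-- The degree of a vector, as a natural number. -/
def vecDegNat {n : ℕ} (v : Fin n → Polynomial F) : ℕ :=
  Finset.univ.sup fun j => (v j).natDegree

/-- The leading position of a vector: the largest index attaining the degree. -/
def leadPos {n : ℕ} (v : Fin n → Polynomial F) : ℕ :=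
  (Finset.univ.filter fun j => (v j).degree = vecDeg v).sup fun j => (j : ℕ)

/-- The value function val(v) = n * deg v + LP(v). -/
def vecVal {n : ℕ} (v : Fin n → Polynomial F) : ℕ :=
  n * vecDegNat v + leadPos v

/-- The weight-embedding map Φ. -/
def PhiW (ν : ℕ) {n : ℕ} (w : Fin n → ℕ) (v : Fin n → Polynomial F) :
    Fin n → Polynomial F :=
  fun j => X ^ (w j) * (Polynomial.expand F ν (v j))

/-- The rows of the canonical basis matrix M. -/
def rowBasisM (ℓ : ℕ) (S G : Fin ℓ → Polynomial F) :
    Fin (ℓ+1) → Fin (ℓ+1) → Polynomial F :=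
  fun i => Fin.cases (Fin.cons 1 S) (fun i' => fun j => if j = i'.succ then G i' else 0) i

variable {n : ℕ}

lemma degree_le_vecDeg (v : Fin n → F[X]) (k : Fin n) : (v k).degree ≤ vecDeg v :=
  Finset.le_sup (f := fun j => (v j).degree) (Finset.mem_univ k)

lemma vecDeg_eq_vecDegNat {v : Fin n → F[X]} (hv : v ≠ 0) : vecDeg v = vecDegNat v := by
  obtain ⟨k, hk⟩ := Function.ne_iff.mp hv
  obtain ⟨d, hd⟩ := WithBot.ne_bot_iff_exists.mp <|
    ne_bot_of_le_ne_bot (degree_ne_bot.mpr hk) (degree_le_vecDeg v k)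
  have hNat : vecDegNat v ≤ d :=
    Finset.sup_le fun j _ =>
      natDegree_le_iff_degree_le.mpr ((degree_le_vecDeg v j).trans_eq hd.symm)
  refine le_antisymm (Finset.sup_le fun j _ => degree_le_natDegree.trans ?_) ?_
  · exact Nat.cast_le.mpr (Finset.le_sup (f := fun j => (v j).natDegree) (Finset.mem_univ j))
  · exact hd ▸ Nat.cast_le.mpr hNat

lemma le_leadPos (v : Fin n → F[X]) {k : Fin n} (hk : (v k).degree = vecDeg v) :
    (k : ℕ) ≤ leadPos v :=
  Finset.le_sup (Finset.mem_filter.mpr ⟨Finset.mem_univ k, hk⟩)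

lemma degree_lt_vecDeg_of_leadPos_lt (v : Fin n → F[X]) {k : Fin n} (hk : leadPos v < k) :
    (v k).degree < vecDeg v :=
  (degree_le_vecDeg v k).lt_of_ne fun heq => (le_leadPos v heq).not_gt hk

lemma leadPos_lt [NeZero n] (v : Fin n → F[X]) : leadPos v < n :=
  (Finset.sup_lt_iff (Nat.pos_of_neZero n)).mpr fun k _ => k.isLt

lemma degree_eq_vecDeg_of_leadPos_eq [NeZero n] (v : Fin n → F[X]) {k : Fin n}
    (hk : leadPos v = k) : (v k).degree = vecDeg v := by
  obtain ⟨m, -, hm⟩ := Finset.exists_mem_eq_sup Finset.univ Finset.univ_nonempty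
    fun j => (v j).degree
  have hattained : (Finset.univ.filter fun j => (v j).degree = vecDeg v).Nonempty :=
    ⟨m, Finset.mem_filter.mpr ⟨Finset.mem_univ m, hm.symm⟩⟩
  obtain ⟨k', hk'mem, hk'⟩ := Finset.exists_mem_eq_sup _ hattained fun j : Fin n => (j : ℕ)
  obtain rfl : k' = k := Fin.ext (hk'.symm.trans hk)
  exact (Finset.mem_filter.mp hk'mem).2

lemma vecVal_lt_of_degree_le [NeZero n] {v w : Fin n → F[X]} (hv : v ≠ 0) (hw : w ≠ 0)
    (hle : ∀ k, (w k).degree ≤ vecDeg v)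
    (hlt : ∀ k : Fin n, leadPos v ≤ k → (w k).degree < vecDeg v) :
    vecVal w < vecVal v := by
  have hdeg : vecDegNat w ≤ vecDegNat v := by
    have : vecDeg w ≤ vecDeg v := Finset.sup_le fun k _ => hle k
    rwa [vecDeg_eq_vecDegNat hv, vecDeg_eq_vecDegNat hw, Nat.cast_le] at this
  have hLPw := leadPos_lt w
  rcases hdeg.lt_or_eq with hdrop | hsame
  · calc vecVal w < n * (vecDegNat w + 1) := by rw [vecVal, Nat.mul_succ]; omega
      _ ≤ n * vecDegNat v := Nat.mul_le_mul_left n hdrop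
      _ ≤ vecVal v := Nat.le_add_right _ _
  · have hlead := degree_eq_vecDeg_of_leadPos_eq w (k := ⟨leadPos w, hLPw⟩) rfl
    rw [vecDeg_eq_vecDegNat hw, hsame, ← vecDeg_eq_vecDegNat hv] at hlead
    have : leadPos w < leadPos v := not_le.mp fun h => (hlt _ h).ne hlead
    rw [vecVal, vecVal, hsame]
    omega

lemma degree_sub_C_mul_X_pow_mul_lt {p r : F[X]} (hp : p ≠ 0) (hr : r ≠ 0)
    (hpr : r.natDegree ≤ p.natDegree) :
    (p - C (p.leadingCoeff / r.leadingCoeff) * X ^ (p.natDegree - r.natDegree) * r).degree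
      < p.degree := by
  have hc : p.leadingCoeff / r.leadingCoeff ≠ 0 :=
    div_ne_zero (leadingCoeff_ne_zero.mpr hp) (leadingCoeff_ne_zero.mpr hr)
  apply degree_sub_lt_left _ hp
  · rw [leadingCoeff_mul, leadingCoeff_C_mul_X_pow,
      div_mul_cancel₀ _ (leadingCoeff_ne_zero.mpr hr)]
  · rw [degree_mul, degree_C_mul_X_pow _ hc, degree_eq_natDegree hp, degree_eq_natDegree hr,
      ← Nat.cast_add, Nat.sub_add_cancel hpr]

lemma degree_mul_le_add_vecDeg (q : F[X]) (v : Fin n → F[X]) (k : Fin n) :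
    (q * v k).degree ≤ q.degree + vecDeg v :=
  (degree_mul_le _ _).trans (add_le_add le_rfl (degree_le_vecDeg v k))

lemma degree_mul_lt_add_vecDeg {q : F[X]} (hq : q ≠ 0) (v : Fin n → F[X]) {k : Fin n}
    (hk : leadPos v < k) : (q * v k).degree < q.degree + vecDeg v := by
  rw [degree_mul]
  exact WithBot.add_lt_add_left (degree_ne_bot.mpr hq) (degree_lt_vecDeg_of_leadPos_lt v hk)

theorem stmt7 (ℓ : ℕ) (vi vj : Fin (ℓ+1) → Polynomial F) (hvi : vi ≠ 0) (hvj : vj ≠ 0)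
    (h : Fin (ℓ+1)) (hLPi : leadPos vi = (h : ℕ)) (hLPj : leadPos vj = (h : ℕ))
    (hdeg : vecDeg vi ≤ vecDeg vj)
    (vj' : Fin (ℓ+1) → Polynomial F)
    (hvj' : vj' = vj -
      (C ((vj h).leadingCoeff / (vi h).leadingCoeff) *
        X ^ (vecDegNat vj - vecDegNat vi)) • vi)
    (hne : vj' ≠ 0) :
    vecVal vj' < vecVal vj := by
  have hvih := degree_eq_vecDeg_of_leadPos_eq vi hLPi
  have hvjh := degree_eq_vecDeg_of_leadPos_eq vj hLPj
  have hvih0 : vi h ≠ 0 := ne_zero_of_coe_le_degree (hvih.trans (vecDeg_eq_vecDegNat hvi)).ge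
  have hvjh0 : vj h ≠ 0 := ne_zero_of_coe_le_degree (hvjh.trans (vecDeg_eq_vecDegNat hvj)).ge
  have hdi := natDegree_eq_of_degree_eq_some (hvih.trans (vecDeg_eq_vecDegNat hvi))
  have hdj := natDegree_eq_of_degree_eq_some (hvjh.trans (vecDeg_eq_vecDegNat hvj))
  rw [vecDeg_eq_vecDegNat hvi, vecDeg_eq_vecDegNat hvj, Nat.cast_le, ← hdi, ← hdj] at hdeg
  rw [← hdi, ← hdj] at hvj'
  set c := (vj h).leadingCoeff / (vi h).leadingCoeff
  set q := C c * X ^ ((vj h).natDegree - (vi h).natDegree)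
  have hc : c ≠ 0 := div_ne_zero (leadingCoeff_ne_zero.mpr hvjh0) (leadingCoeff_ne_zero.mpr hvih0)
  have hq0 : q ≠ 0 := mul_ne_zero (C_ne_zero.mpr hc) (pow_ne_zero _ X_ne_zero)
  have hshift : q.degree + vecDeg vi = vecDeg vj := by
    rw [← hvih, ← hvjh, degree_C_mul_X_pow _ hc, degree_eq_natDegree hvih0,
      degree_eq_natDegree hvjh0, ← Nat.cast_add, Nat.sub_add_cancel hdeg]
  have hcoord : ∀ k, vj' k = vj k - q * vi k := fun k => by rw [hvj']; rfl
  refine vecVal_lt_of_degree_le hvj hne (fun k => ?_) (fun k hk => ?_)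
  · rw [hcoord]
    exact (degree_sub_le _ _).trans
      (max_le (degree_le_vecDeg vj k) (hshift ▸ degree_mul_le_add_vecDeg q vi k))
  · rw [hcoord]
    rcases (hLPj ▸ hk : (h : ℕ) ≤ k).eq_or_lt with hkh | hkh
    · obtain rfl : h = k := Fin.ext hkh
      exact hvjh ▸ degree_sub_C_mul_X_pow_mul_lt hvjh0 hvih0 hdeg
    · exact (degree_sub_le _ _).trans_lt (max_lt (degree_lt_vecDeg_of_leadPos_lt vj (hLPj ▸ hkh))
        (hshift ▸ degree_mul_lt_add_vecDeg hq0 vi (hLPi ▸ hkh)))
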